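/- arXiv:2507.01288 — 2 statements merged into one kernel-verified Lean document; each statement's English description precedes it below -/
import Mathlib

section
/- Let u : ℝ × ℝ² → ℝ be a C³ (in space, C¹ in time) solution of the two-dimensional Zakharov–Kuznetsov equation ∂ₜu + ∂ₓ³u + ∂ₓ∂_y²u = ∂ₓ(u²). Define new variables x′ = 2^{−2/3}x + 2^{−2/3}·3^{1/2} y and y′ = 2^{−2/3}x − 2^{−2/3}·3^{1/2} y, and set v(t, x′, y′) = 2^{−2/3} u(t, x, y). Then v is a solution of the symmetric equation ∂ₜv + (∂_{x′}³ + ∂_{y′}³)v = (∂_{x′} + ∂_{y′})(v²). -/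
/-!
In the new variables `∂_{x′}` and `∂_{y′}` become the directional derivatives along `(α, β)` and
`(α, -β)`, where `α = 2^{-1/3}` and `β = α / √3`. Writing `A = α ∂ₓ` and `B = β ∂_y`, which commute
on `C³` functions, `(A + B)³ + (A - B)³ = 2A³ + 6AB² = 2α³ ∂ₓ³ + 6αβ² ∂ₓ∂_y²`, and `2α³ = 6αβ² = 1`
turns this into the Zakharov–Kuznetsov dispersion. Likewise `(A + B) + (A - B) = 2α ∂ₓ`, and the
prefactor `c = 2^{-2/3}` satisfies `2cα = 1`, which matches the quadratic terms.
-/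

noncomputable section

/-- Partial derivative in the first spatial variable of a function on `ℝ²`. -/
def pdx (f : ℝ × ℝ → ℝ) : ℝ × ℝ → ℝ := fun p => fderiv ℝ f p (1, 0)

/-- Partial derivative in the second spatial variable of a function on `ℝ²`. -/
def pdy (f : ℝ × ℝ → ℝ) : ℝ × ℝ → ℝ := fun p => fderiv ℝ f p (0, 1)

section DirDeriv

variable {E E' F : Type*} [NormedAddCommGroup E] [NormedSpace ℝ E]
  [NormedAddCommGroup E'] [NormedSpace ℝ E'] [NormedAddCommGroup F] [NormedSpace ℝ F]

def dirDeriv (w : E) (f : E → F) : E → F := fun p => fderiv ℝ f p w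

theorem dirDeriv_add_left (a b : E) (f : E → F) :
    dirDeriv (a + b) f = dirDeriv a f + dirDeriv b f :=
  funext fun p => map_add (fderiv ℝ f p) a b

theorem dirDeriv_sub_left (a b : E) (f : E → F) :
    dirDeriv (a - b) f = dirDeriv a f - dirDeriv b f :=
  funext fun p => map_sub (fderiv ℝ f p) a b

theorem dirDeriv_smul_left (c : ℝ) (a : E) (f : E → F) :
    dirDeriv (c • a) f = c • dirDeriv a f :=
  funext fun p => map_smul (fderiv ℝ f p) c a

theorem dirDeriv_add {f g : E → F} (hf : Differentiable ℝ f) (hg : Differentiable ℝ g)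
    (w : E) :
    dirDeriv w (f + g) = dirDeriv w f + dirDeriv w g :=
  funext fun p => by simp [dirDeriv, fderiv_add (hf p) (hg p)]

theorem dirDeriv_sub {f g : E → F} (hf : Differentiable ℝ f) (hg : Differentiable ℝ g)
    (w : E) :
    dirDeriv w (f - g) = dirDeriv w f - dirDeriv w g :=
  funext fun p => by simp [dirDeriv, fderiv_sub (hf p) (hg p)]

theorem dirDeriv_const_smul (c : ℝ) (w : E) (f : E → F) :
    dirDeriv w (c • f) = c • dirDeriv w f := by
  funext p
  simp [dirDeriv, fderiv_const_smul_field]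

theorem dirDeriv_comp_clm {g : E' → F} (hg : Differentiable ℝ g) (L : E →L[ℝ] E') (w : E) :
    dirDeriv w (g ∘ L) = dirDeriv (L w) g ∘ L :=
  funext fun p => by simp [dirDeriv, fderiv_comp p (hg (L p)) L.differentiableAt]

theorem ContDiff.dirDeriv {n : WithTop ℕ∞} {f : E → F} (hf : ContDiff ℝ (n + 1) f) (w : E) :
    ContDiff ℝ n (dirDeriv w f) :=
  (hf.fderiv_right le_rfl).clm_apply contDiff_const

theorem dirDeriv_comm {f : E → F} (hf : ContDiff ℝ 2 f) (a b : E) :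
    dirDeriv a (dirDeriv b f) = dirDeriv b (dirDeriv a f) := by
  have hf' : Differentiable ℝ (fderiv ℝ f) :=
    (hf.fderiv_right (by norm_num : (1 : WithTop ℕ∞) + 1 ≤ 2)).differentiable one_ne_zero
  have hsecond : ∀ x y p, dirDeriv x (dirDeriv y f) p = fderiv ℝ (fderiv ℝ f) p x y :=
      fun x y p => by
    show fderiv ℝ (fun q => fderiv ℝ f q y) p x = _
    rw [fderiv_clm_apply (hf' p) (differentiableAt_const y)]
    simp
  funext p
  rw [hsecond, hsecond]
  exact hf.contDiffAt.isSymmSndFDerivAt (by simp) a b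

theorem dirDeriv_cube_add_add_cube_sub {f : E → F} (hf : ContDiff ℝ 3 f) (a b : E) :
    dirDeriv (a + b) (dirDeriv (a + b) (dirDeriv (a + b) f))
      + dirDeriv (a - b) (dirDeriv (a - b) (dirDeriv (a - b) f))
      = (2 : ℝ) • dirDeriv a (dirDeriv a (dirDeriv a f))
        + (6 : ℝ) • dirDeriv a (dirDeriv b (dirDeriv b f)) := by
  have h2 : ∀ x, ContDiff ℝ 2 (dirDeriv x f) := fun x => hf.dirDeriv x
  have d1 : ∀ x, Differentiable ℝ (dirDeriv x f) := fun x => (h2 x).differentiable (by simp)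
  have d2 : ∀ x y, Differentiable ℝ (dirDeriv x (dirDeriv y f)) := fun x y =>
    ((h2 y).dirDeriv (n := 1) x).differentiable one_ne_zero
  have hbab : dirDeriv b (dirDeriv a (dirDeriv b f)) = dirDeriv a (dirDeriv b (dirDeriv b f)) :=
    dirDeriv_comm (h2 b) b a
  have hbba : dirDeriv b (dirDeriv b (dirDeriv a f)) = dirDeriv a (dirDeriv b (dirDeriv b f)) := by
    rw [dirDeriv_comm (hf.of_le (by norm_num) : ContDiff ℝ 2 f) b a, hbab]
  simp (disch := simp [d1, d2]) only
    [dirDeriv_add_left, dirDeriv_sub_left, dirDeriv_add, dirDeriv_sub]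
  rw [hbab, hbba]
  module

theorem dirDeriv_const_smul_comp_clm {g : E' → F} (hg : Differentiable ℝ g) (c : ℝ)
    (L : E →L[ℝ] E') (w : E) :
    dirDeriv w (c • (g ∘ L)) = c • (dirDeriv (L w) g ∘ L) := by
  rw [dirDeriv_const_smul, dirDeriv_comp_clm hg]

theorem dirDeriv_cube_const_smul_comp_clm {g : E' → F} (hg : ContDiff ℝ 3 g) (c : ℝ)
    (L : E →L[ℝ] E') (w : E) :
    dirDeriv w (dirDeriv w (dirDeriv w (c • (g ∘ L))))
      = c • (dirDeriv (L w) (dirDeriv (L w) (dirDeriv (L w) g)) ∘ L) := by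
  have h2 : ContDiff ℝ 2 (dirDeriv (L w) g) := hg.dirDeriv _
  have h1 : ContDiff ℝ 1 (dirDeriv (L w) (dirDeriv (L w) g)) := h2.dirDeriv _
  rw [dirDeriv_const_smul_comp_clm (hg.differentiable (by norm_num)),
    dirDeriv_const_smul_comp_clm (h2.differentiable (by norm_num)),
    dirDeriv_const_smul_comp_clm (h1.differentiable one_ne_zero)]

end DirDeriv

theorem pdx_eq_dirDeriv : pdx = dirDeriv ((1 : ℝ), (0 : ℝ)) := rfl

theorem pdy_eq_dirDeriv : pdy = dirDeriv ((0 : ℝ), (1 : ℝ)) := rfl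

theorem prod_eq_smul_add_smul (α β : ℝ) :
    ((α, β) : ℝ × ℝ) = α • ((1 : ℝ), (0 : ℝ)) + β • ((0 : ℝ), (1 : ℝ)) := by
  simp

theorem dirDeriv_add_dirDeriv_conj (g : ℝ × ℝ → ℝ) (α β : ℝ) :
    dirDeriv (α, β) g + dirDeriv (α, -β) g = (2 * α) • pdx g := by
  rw [prod_eq_smul_add_smul α β, prod_eq_smul_add_smul α (-β), dirDeriv_add_left,
    dirDeriv_add_left, dirDeriv_smul_left, dirDeriv_smul_left, dirDeriv_smul_left,
    ← pdx_eq_dirDeriv]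
  module

theorem dirDeriv_cube_add_dirDeriv_cube_conj {f : ℝ × ℝ → ℝ} (hf : ContDiff ℝ 3 f)
    (α β : ℝ) :
    dirDeriv (α, β) (dirDeriv (α, β) (dirDeriv (α, β) f))
      + dirDeriv (α, -β) (dirDeriv (α, -β) (dirDeriv (α, -β) f))
      = (2 * α ^ 3) • pdx (pdx (pdx f)) + (6 * α * β ^ 2) • pdx (pdy (pdy f)) := by
  have hconj : ((α, -β) : ℝ × ℝ) = α • ((1 : ℝ), (0 : ℝ)) - β • ((0 : ℝ), (1 : ℝ)) := by
    simp [sub_eq_add_neg]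
  rw [prod_eq_smul_add_smul α β, hconj, dirDeriv_cube_add_add_cube_sub hf]
  simp only [dirDeriv_smul_left, dirDeriv_const_smul, ← pdx_eq_dirDeriv, ← pdy_eq_dirDeriv]
  module

def symmChange (α β : ℝ) : ℝ × ℝ →L[ℝ] ℝ × ℝ :=
  (α • (ContinuousLinearMap.fst ℝ ℝ ℝ + ContinuousLinearMap.snd ℝ ℝ ℝ)).prod
    (β • (ContinuousLinearMap.fst ℝ ℝ ℝ - ContinuousLinearMap.snd ℝ ℝ ℝ))

theorem symmChange_apply (α β : ℝ) (q : ℝ × ℝ) :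
    symmChange α β q = (α * (q.1 + q.2), β * (q.1 - q.2)) := by
  simp [symmChange, mul_add, mul_sub]

theorem symmChange_apply_one_zero (α β : ℝ) : symmChange α β (1, 0) = (α, β) := by
  simp [symmChange_apply]

theorem symmChange_apply_zero_one (α β : ℝ) : symmChange α β (0, 1) = (α, -β) := by
  simp [symmChange_apply]

theorem pdx_add_pdy_const_smul_comp_symmChange {g : ℝ × ℝ → ℝ} (hg : Differentiable ℝ g)
    (c α β : ℝ) :
    pdx (c • (g ∘ symmChange α β)) + pdy (c • (g ∘ symmChange α β))
      = (c * (2 * α)) • (pdx g ∘ symmChange α β) := by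
  rw [pdx_eq_dirDeriv, pdy_eq_dirDeriv, dirDeriv_const_smul_comp_clm hg,
    dirDeriv_const_smul_comp_clm hg, symmChange_apply_one_zero, symmChange_apply_zero_one,
    ← smul_add, ← Pi.add_comp, dirDeriv_add_dirDeriv_conj, Pi.smul_comp, smul_smul]
  rfl

theorem pdx_cube_add_pdy_cube_const_smul_comp_symmChange {f : ℝ × ℝ → ℝ}
    (hf : ContDiff ℝ 3 f) (c α β : ℝ) :
    pdx (pdx (pdx (c • (f ∘ symmChange α β)))) + pdy (pdy (pdy (c • (f ∘ symmChange α β))))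
      = c • (((2 * α ^ 3) • pdx (pdx (pdx f)) + (6 * α * β ^ 2) • pdx (pdy (pdy f)))
          ∘ symmChange α β) := by
  rw [pdx_eq_dirDeriv, pdy_eq_dirDeriv, dirDeriv_cube_const_smul_comp_clm hf,
    dirDeriv_cube_const_smul_comp_clm hf, symmChange_apply_one_zero, symmChange_apply_zero_one,
    ← smul_add, ← Pi.add_comp, dirDeriv_cube_add_dirDeriv_cube_conj hf]
  rfl

def SolvesZK (u : ℝ → ℝ × ℝ → ℝ) : Prop :=
  ∀ (t : ℝ) (p : ℝ × ℝ),
    deriv (fun s => u s p) t + pdx (pdx (pdx (u t))) p + pdx (pdy (pdy (u t))) p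
      = pdx (fun q => (u t q) ^ 2) p

def SolvesSymmetricZK (v : ℝ → ℝ × ℝ → ℝ) : Prop :=
  ∀ (t : ℝ) (p : ℝ × ℝ),
    deriv (fun s => v s p) t + pdx (pdx (pdx (v t))) p + pdy (pdy (pdy (v t))) p
      = pdx (fun q => (v t q) ^ 2) p + pdy (fun q => (v t q) ^ 2) p

theorem SolvesZK.solvesSymmetricZK_of_eq_smul_comp {u v : ℝ → ℝ × ℝ → ℝ} {c α β : ℝ}
    (hu : SolvesZK u) (hu_space : ∀ t, ContDiff ℝ 3 (u t))
    (hv : ∀ s, v s = c • (u s ∘ symmChange α β))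
    (hα : 2 * α ^ 3 = 1) (hαβ : 6 * α * β ^ 2 = 1) (hcα : c * (2 * α) = 1) :
    SolvesSymmetricZK v := by
  intro t p
  have htime : deriv (fun s => v s p) t = c * deriv (fun s => u s (symmChange α β p)) t := by
    simp only [hv, Pi.smul_apply, Function.comp_apply, smul_eq_mul, deriv_const_mul_field]
  have hcube : pdx (pdx (pdx (v t))) + pdy (pdy (pdy (v t)))
      = c • ((pdx (pdx (pdx (u t))) + pdx (pdy (pdy (u t)))) ∘ symmChange α β) := by
    rw [hv, pdx_cube_add_pdy_cube_const_smul_comp_symmChange (hu_space t), hα, hαβ, one_smul,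
      one_smul]
  have hsq : pdx (fun q => (v t q) ^ 2) + pdy (fun q => (v t q) ^ 2)
      = c • (pdx (fun q => (u t q) ^ 2) ∘ symmChange α β) := by
    have hsq_comp : (fun q => (v t q) ^ 2) = c ^ 2 • ((fun q => (u t q) ^ 2) ∘ symmChange α β) := by
      funext q
      simp only [hv, Pi.smul_apply, Function.comp_apply, smul_eq_mul]
      ring
    have hg : Differentiable ℝ (fun q => (u t q) ^ 2) :=
      ((hu_space t).differentiable (by norm_num)).pow 2
    rw [hsq_comp, pdx_add_pdy_const_smul_comp_symmChange hg]
    congr 1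
    linear_combination c * hcα
  rw [add_assoc, ← Pi.add_apply (pdx _), hcube, ← Pi.add_apply (pdx _), hsq, htime]
  simp only [Pi.smul_apply, Pi.add_apply, Function.comp_apply, smul_eq_mul]
  linear_combination c * hu t (symmChange α β p)

theorem ZK_symmetrization_general (u v : ℝ → ℝ × ℝ → ℝ)
    (hu_space : ∀ t : ℝ, ContDiff ℝ 3 (u t))
    (hu_eq : ∀ (t : ℝ) (p : ℝ × ℝ),
      deriv (fun s => u s p) t + pdx (pdx (pdx (u t))) p + pdx (pdy (pdy (u t))) p
        = pdx (fun q => (u t q) ^ 2) p)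
    (hv : ∀ (t x y : ℝ),
      v t ((2:ℝ) ^ (-(2:ℝ)/3) * x + (2:ℝ) ^ (-(2:ℝ)/3) * Real.sqrt 3 * y,
           (2:ℝ) ^ (-(2:ℝ)/3) * x - (2:ℝ) ^ (-(2:ℝ)/3) * Real.sqrt 3 * y)
        = (2:ℝ) ^ (-(2:ℝ)/3) * u t (x, y)) :
    ∀ (t : ℝ) (p : ℝ × ℝ),
      deriv (fun s => v s p) t + pdx (pdx (pdx (v t))) p + pdy (pdy (pdy (v t))) p
        = pdx (fun q => (v t q) ^ 2) p + pdy (fun q => (v t q) ^ 2) p := by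
  set c : ℝ := (2:ℝ) ^ (-(2:ℝ)/3)
  have hc0 : c ≠ 0 := by positivity
  have hc3 : c ^ 3 = 1 / 4 := by
    rw [← Real.rpow_natCast, ← Real.rpow_mul (by norm_num)]
    norm_num
  have h3 : Real.sqrt 3 ^ 2 = 3 := Real.sq_sqrt (by norm_num)
  -- inverting `(x, y) ↦ (x′, y′)` gives `x = (x′ + y′) / (2c)` and `y = (x′ - y′) / (2c√3)`
  have hv' : ∀ s, v s = c • (u s ∘ symmChange (2 * c)⁻¹ (2 * c * Real.sqrt 3)⁻¹) := fun s => by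
    funext q
    rw [Pi.smul_apply, Function.comp_apply, smul_eq_mul, symmChange_apply, ← hv]
    congr 1
    ext <;> (field_simp; ring)
  refine SolvesZK.solvesSymmetricZK_of_eq_smul_comp hu_eq hu_space hv' ?_ ?_ (by field_simp)
  · field_simp
    linear_combination (-4) * hc3
  · field_simp
    linear_combination (-8 * c ^ 3) * h3 - 24 * hc3

/-- if `u` (C¹ in time, C³ in space) solves the 2D Zakharov–Kuznetsov
equation `∂ₜu + ∂ₓ³u + ∂ₓ∂_y²u = ∂ₓ(u²)`, and `v` is defined through the change of
variables `x′ = 2^{-2/3}x + 2^{-2/3}√3 y`, `y′ = 2^{-2/3}x - 2^{-2/3}√3 y`,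
`v(t,x′,y′) = 2^{-2/3}u(t,x,y)`, then `v` solves the symmetric equation
`∂ₜv + (∂_{x′}³ + ∂_{y′}³)v = (∂_{x′} + ∂_{y′})(v²)`. -/
theorem ZK_symmetrization (u v : ℝ → ℝ × ℝ → ℝ)
    (hu_time : ∀ p : ℝ × ℝ, ContDiff ℝ 1 fun t => u t p)
    (hu_space : ∀ t : ℝ, ContDiff ℝ 3 (u t))
    (hu_eq : ∀ (t : ℝ) (p : ℝ × ℝ),
      deriv (fun s => u s p) t + pdx (pdx (pdx (u t))) p + pdx (pdy (pdy (u t))) p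
        = pdx (fun q => (u t q) ^ 2) p)
    (hv : ∀ (t x y : ℝ),
      v t ((2:ℝ) ^ (-(2:ℝ)/3) * x + (2:ℝ) ^ (-(2:ℝ)/3) * Real.sqrt 3 * y,
           (2:ℝ) ^ (-(2:ℝ)/3) * x - (2:ℝ) ^ (-(2:ℝ)/3) * Real.sqrt 3 * y)
        = (2:ℝ) ^ (-(2:ℝ)/3) * u t (x, y)) :
    ∀ (t : ℝ) (p : ℝ × ℝ),
      deriv (fun s => v s p) t + pdx (pdx (pdx (v t))) p + pdy (pdy (pdy (v t))) p
        = pdx (fun q => (v t q) ^ 2) p + pdy (fun q => (v t q) ^ 2) p :=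
  ZK_symmetrization_general u v hu_space hu_eq hv
end
end

section
/- Define, on (ℝ² × ℝ²) \ {(0,0)}, the function m̃(ζ, σ) = (ζ₁ − σ₁)² / [ (ζ₁ + σ₁)² − (ζ₁ + σ₁)(ζ₂ + σ₂) + (ζ₂ + σ₂)² + (ζ₁ − σ₁)² + (ζ₂ − σ₂)² ]. Then m̃ is C^∞ on (ℝ² × ℝ²) \ {(0,0)} and satisfies the Hörmander–Mihlin condition: for every multi-index β ∈ ℤ₊⁴ there exists a constant C_β such that |∂^β_{ζ,σ} m̃(ζ, σ)| ≤ C_β (|ζ|² + |σ|²)^{−|β|/2} for all (ζ, σ) ≠ (0,0). -/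
noncomputable section

/-- Points of `ℝ² × ℝ²` realized as functions on `Fin 4`: `ζ = (x 0, x 1)`,
`σ = (x 2, x 3)`. -/
abbrev R4 := Fin 4 → ℝ

/-- The multiplier `m̃(ζ,σ) = (ζ₁-σ₁)² / [(ζ₁+σ₁)² - (ζ₁+σ₁)(ζ₂+σ₂) + (ζ₂+σ₂)²
+ (ζ₁-σ₁)² + (ζ₂-σ₂)²]`, with `ζ = (x 0, x 1)` and `σ = (x 2, x 3)`. -/
def mTilde (x : R4) : ℝ :=
  (x 0 - x 2) ^ 2 /
    ((x 0 + x 2) ^ 2 - (x 0 + x 2) * (x 1 + x 3) + (x 1 + x 3) ^ 2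
      + (x 0 - x 2) ^ 2 + (x 1 - x 3) ^ 2)

/-- Iterated partial derivatives `∂^β` in the four variables `(ζ₁,ζ₂,σ₁,σ₂)`, where the
multi-index `β` is recorded as the list of coordinate directions in which one
differentiates. -/
def pderivList : List (Fin 4) → (R4 → ℝ) → (R4 → ℝ)
  | [], f => f
  | i :: l, f => pderivList l (fun x => fderiv ℝ f x (Pi.single i 1))


lemma sq_sum_pos {x : R4} (hx : x ≠ 0) :
    0 < x 0 ^ 2 + x 1 ^ 2 + x 2 ^ 2 + x 3 ^ 2 := by
  obtain ⟨i, hi⟩ := Function.ne_iff.mp hx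
  simp only [Pi.zero_apply] at hi
  have hcases : i = 0 ∨ i = 1 ∨ i = 2 ∨ i = 3 := by omega
  rcases hcases with h | h | h | h <;> subst h <;>
    nlinarith [pow_two_pos_of_ne_zero hi, sq_nonneg (x 0), sq_nonneg (x 1),
      sq_nonneg (x 2), sq_nonneg (x 3)]

lemma denom_ge (x : R4) :
    x 0 ^ 2 + x 1 ^ 2 + x 2 ^ 2 + x 3 ^ 2 ≤
      (x 0 + x 2) ^ 2 - (x 0 + x 2) * (x 1 + x 3) + (x 1 + x 3) ^ 2
        + (x 0 - x 2) ^ 2 + (x 1 - x 3) ^ 2 := by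
  nlinarith [sq_nonneg (x 0 + x 2 - (x 1 + x 3)), sq_nonneg (x 0 - x 2),
    sq_nonneg (x 1 - x 3)]

lemma coord_contDiff (i : Fin 4) : ContDiff ℝ (⊤ : ℕ∞) (fun x : R4 => x i) :=
  contDiff_pi.mp contDiff_id i

lemma mTilde_smooth : ContDiffOn ℝ (⊤ : ℕ∞) mTilde {x : R4 | x ≠ 0} := by
  have hN : ContDiff ℝ ((⊤ : ℕ∞) : WithTop ℕ∞) (fun x : R4 => (x 0 - x 2) ^ 2) :=
    ((coord_contDiff 0).sub (coord_contDiff 2)).pow 2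
  have hD : ContDiff ℝ ((⊤ : ℕ∞) : WithTop ℕ∞) (fun x : R4 =>
      (x 0 + x 2) ^ 2 - (x 0 + x 2) * (x 1 + x 3) + (x 1 + x 3) ^ 2
        + (x 0 - x 2) ^ 2 + (x 1 - x 3) ^ 2) := by
    have h02 := (coord_contDiff 0).add (coord_contDiff 2)
    have h13 := (coord_contDiff 1).add (coord_contDiff 3)
    have h02' := (coord_contDiff 0).sub (coord_contDiff 2)
    have h13' := (coord_contDiff 1).sub (coord_contDiff 3)
    exact ((((h02.pow 2).sub (h02.mul h13)).add (h13.pow 2)).add (h02'.pow 2)).add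
      (h13'.pow 2)
  exact hN.contDiffOn.div hD.contDiffOn fun x hx =>
    ne_of_gt (lt_of_lt_of_le (sq_sum_pos hx) (denom_ge x))

lemma mTilde_homog {t : ℝ} (ht : t ≠ 0) (x : R4) : mTilde (t • x) = mTilde x := by
  simp only [mTilde, Pi.smul_apply, smul_eq_mul]
  rw [show (t * x 0 + t * x 2) ^ 2 - (t * x 0 + t * x 2) * (t * x 1 + t * x 3)
        + (t * x 1 + t * x 3) ^ 2 + (t * x 0 - t * x 2) ^ 2 + (t * x 1 - t * x 3) ^ 2
      = t ^ 2 * ((x 0 + x 2) ^ 2 - (x 0 + x 2) * (x 1 + x 3) + (x 1 + x 3) ^ 2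
        + (x 0 - x 2) ^ 2 + (x 1 - x 3) ^ 2) by ring,
    show (t * x 0 - t * x 2) ^ 2 = t ^ 2 * ((x 0 - x 2) ^ 2) by ring,
    mul_div_mul_left _ _ (pow_ne_zero 2 ht)]

lemma pderiv_key (l : List (Fin 4)) :
    ∀ (f : R4 → ℝ) (k : ℕ),
      ContDiffOn ℝ (⊤ : ℕ∞) f {x : R4 | x ≠ 0} →
      (∀ t : ℝ, 0 < t → ∀ x : R4, x ≠ 0 → t ^ k * f (t • x) = f x) →
      ContDiffOn ℝ (⊤ : ℕ∞) (pderivList l f) {x : R4 | x ≠ 0} ∧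
      ∀ t : ℝ, 0 < t → ∀ x : R4, x ≠ 0 →
        t ^ (k + l.length) * pderivList l f (t • x) = pderivList l f x := by
  induction l with
  | nil =>
    intro f k hf hhom
    exact ⟨hf, by simpa [pderivList] using hhom⟩
  | cons i l ih =>
    intro f k hf hhom
    have hUopen : IsOpen {x : R4 | x ≠ 0} := isOpen_ne
    set g : R4 → ℝ := fun x => fderiv ℝ f x (Pi.single i 1) with hgdef
    have hfderiv : ContDiffOn ℝ (⊤ : ℕ∞) (fderiv ℝ f) {x : R4 | x ≠ 0} :=
      hf.fderiv_of_isOpen hUopen (by simp)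
    have hg : ContDiffOn ℝ (⊤ : ℕ∞) g {x : R4 | x ≠ 0} := by
      have h := (ContinuousLinearMap.apply ℝ ℝ ((Pi.single i 1 : R4))).contDiff.comp_contDiffOn
        hfderiv
      exact h
    have hghom : ∀ t : ℝ, 0 < t → ∀ x : R4, x ≠ 0 → t ^ (k + 1) * g (t • x) = g x := by
      intro t ht x hx
      have htx : t • x ≠ 0 := smul_ne_zero (ne_of_gt ht) hx
      have hdiff : DifferentiableAt ℝ f (t • x) :=
        (hf.differentiableOn (by simp)).differentiableAt (hUopen.mem_nhds htx)
      have h1 : HasFDerivAt (fun y : R4 => t • y) (t • (ContinuousLinearMap.id ℝ R4)) x :=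
        (hasFDerivAt_id x).const_smul t
      have h2 : HasFDerivAt (fun y : R4 => f (t • y))
          ((fderiv ℝ f (t • x)).comp (t • (ContinuousLinearMap.id ℝ R4))) x :=
        (hdiff.hasFDerivAt).comp x h1
      have h3 : HasFDerivAt (fun y : R4 => t ^ k * f (t • y))
          (t ^ k • ((fderiv ℝ f (t • x)).comp (t • (ContinuousLinearMap.id ℝ R4)))) x :=
        h2.const_mul (t ^ k)
      have h4 : HasFDerivAt f
          (t ^ k • ((fderiv ℝ f (t • x)).comp (t • (ContinuousLinearMap.id ℝ R4)))) x := by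
        refine h3.congr_of_eventuallyEq ?_
        filter_upwards [hUopen.mem_nhds hx] with y hy
        exact (hhom t ht y hy).symm
      have h5 := h4.fderiv
      have : g x = t ^ (k + 1) * g (t • x) := by
        show fderiv ℝ f x (Pi.single i 1) = _
        rw [h5]
        simp only [ContinuousLinearMap.coe_smul', Pi.smul_apply,
          ContinuousLinearMap.coe_comp', Function.comp_apply,
          ContinuousLinearMap.coe_id', id_eq, map_smul, smul_eq_mul]
        ring
      exact this.symm
    obtain ⟨h1, h2⟩ := ih g (k + 1) hg hghom
    refine ⟨?_, ?_⟩
    · simpa only [pderivList] using h1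
    · intro t ht x hx
      have := h2 t ht x hx
      simp only [pderivList, List.length_cons]
      rw [show k + (l.length + 1) = k + 1 + l.length by omega]
      exact this

/-- the multiplier `m̃` is `C^∞` away from the origin and satisfies the
Hörmander–Mihlin condition: for every multi-index `β` there is `C_β` with
`|∂^β m̃(ζ,σ)| ≤ C_β (|ζ|² + |σ|²)^{-|β|/2}` for all `(ζ,σ) ≠ (0,0)`. -/
theorem mTilde_hormander_mihlin :
    ContDiffOn ℝ (⊤ : ℕ∞) mTilde {x : R4 | x ≠ 0} ∧
    ∀ β : List (Fin 4), ∃ C : ℝ, 0 < C ∧ ∀ x : R4, x ≠ 0 →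
      |pderivList β mTilde x| ≤
        C * (x 0 ^ 2 + x 1 ^ 2 + x 2 ^ 2 + x 3 ^ 2) ^ (-(β.length : ℝ) / 2) := by
  refine ⟨mTilde_smooth, ?_⟩
  intro β
  obtain ⟨hsmβ, hhomβ⟩ := pderiv_key β mTilde 0 mTilde_smooth
    (fun t ht x _ => by simpa using mTilde_homog (ne_of_gt ht) x)
  set g := pderivList β mTilde with hg
  set S : Set R4 := {x : R4 | x 0 ^ 2 + x 1 ^ 2 + x 2 ^ 2 + x 3 ^ 2 = 1} with hS
  have hScl : IsClosed S := isClosed_eq (by fun_prop) continuous_const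
  have hSb : Bornology.IsBounded S := by
    refine (Metric.isBounded_closedBall (x := (0 : R4)) (r := 1)).subset ?_
    intro x hx
    simp only [hS, Set.mem_setOf_eq] at hx
    simp only [Metric.mem_closedBall, dist_zero_right]
    rw [pi_norm_le_iff_of_nonneg zero_le_one]
    intro i
    rw [Real.norm_eq_abs, abs_le]
    have hcases : i = 0 ∨ i = 1 ∨ i = 2 ∨ i = 3 := by omega
    rcases hcases with h | h | h | h <;> subst h <;>
      exact ⟨by nlinarith [sq_nonneg (x 0), sq_nonneg (x 1), sq_nonneg (x 2), sq_nonneg (x 3)],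
        by nlinarith [sq_nonneg (x 0), sq_nonneg (x 1), sq_nonneg (x 2), sq_nonneg (x 3)]⟩
  have hScomp : IsCompact S := Metric.isCompact_iff_isClosed_bounded.mpr ⟨hScl, hSb⟩
  have hSne : S.Nonempty := by
    refine ⟨![1, 0, 0, 0], ?_⟩
    have e2 : (![1, 0, 0, 0] : R4) 2 = 0 := rfl
    have e3 : (![1, 0, 0, 0] : R4) 3 = 0 := rfl
    norm_num [hS, e2, e3]
  have hSU : S ⊆ {x : R4 | x ≠ 0} := by
    intro x hx h0
    rw [hS, Set.mem_setOf_eq, h0] at hx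
    norm_num at hx
  have hcont : ContinuousOn (fun x => |g x|) S := (hsmβ.continuousOn.mono hSU).abs
  obtain ⟨z, hzS, hz⟩ := hScomp.exists_isMaxOn hSne hcont
  refine ⟨|g z| + 1, by positivity, ?_⟩
  intro x hx
  have hq0 : 0 < x 0 ^ 2 + x 1 ^ 2 + x 2 ^ 2 + x 3 ^ 2 := sq_sum_pos hx
  set r := Real.sqrt (x 0 ^ 2 + x 1 ^ 2 + x 2 ^ 2 + x 3 ^ 2) with hrdef
  have hr : 0 < r := Real.sqrt_pos.mpr hq0
  have hr2 : r ^ 2 = x 0 ^ 2 + x 1 ^ 2 + x 2 ^ 2 + x 3 ^ 2 := Real.sq_sqrt hq0.le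
  have huS : (r⁻¹ • x) ∈ S := by
    simp only [hS, Set.mem_setOf_eq, Pi.smul_apply, smul_eq_mul]
    have h : r⁻¹ ^ 2 * (x 0 ^ 2 + x 1 ^ 2 + x 2 ^ 2 + x 3 ^ 2) = 1 := by
      rw [← hr2]; field_simp
    linear_combination h
  have key := hhomβ r⁻¹ (inv_pos.mpr hr) x hx
  rw [zero_add] at key
  have hqpow : (x 0 ^ 2 + x 1 ^ 2 + x 2 ^ 2 + x 3 ^ 2) ^ (-(β.length : ℝ) / 2)
      = (r⁻¹) ^ β.length := by
    rw [← hr2, ← Real.rpow_natCast r 2, ← Real.rpow_mul hr.le,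
      show ((2 : ℕ) : ℝ) * (-(β.length : ℝ) / 2) = -(β.length : ℝ) by push_cast; ring,
      Real.rpow_neg hr.le, Real.rpow_natCast, inv_pow]
  have hb : |g x| ≤ (r⁻¹) ^ β.length * (|g z| + 1) := by
    rw [← key, abs_mul, abs_of_nonneg (by positivity : (0:ℝ) ≤ (r⁻¹) ^ β.length)]
    exact mul_le_mul_of_nonneg_left ((hz huS).trans (by linarith)) (by positivity)
  rw [hqpow, mul_comm]
  exact hb
end
end
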